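/- arXiv:1802.07397 — 2 statements merged into one kernel-verified Lean document; each statement's English description precedes it below -/
import Mathlib

section
/- For words v, w over Σ with lengths divisible by d, the ⊑_d-downward closure of v* is contained in the ⊑_d-downward closure of w* if and only if κ_d(v)(i) ⊆ κ_d(w)(i) for every i ∈ {1,…,d}. -/
/-- `kappa d w i` is the set of letters occurring in `w` at (1-based) positions
congruent to `i` modulo `d`. -/
def kappa {A : Type*} (d : ℕ) (w : List A) (i : ℕ) : Set A :=
  {a | ∃ p : ℕ, w[p]? = some a ∧ (p + 1) % d = i % d}

/-- `ModEmb d u v` : `u` embeds into `v` by a strictly monotone, letter-preserving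
map that preserves positions modulo `d`, and `|u| ≡ |v| (mod d)`. -/
def ModEmb {A : Type*} (d : ℕ) (u v : List A) : Prop :=
  u.length % d = v.length % d ∧
    ∃ α : Fin u.length → Fin v.length, StrictMono α ∧
      (∀ i, u.get i = v.get (α i)) ∧
      (∀ i : Fin u.length, ((α i : ℕ)) % d = ((i : ℕ)) % d)

/-- Downward closure of a set of words with respect to `ModEmb d`. -/
def dclMod {A : Type*} (d : ℕ) (S : Set (List A)) : Set (List A) :=
  {u | ∃ v ∈ S, ModEmb d u v}

/-- The `k`-th power of a word. -/
def wpow {A : Type*} (v : List A) (k : ℕ) : List A :=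
  (List.replicate k v).flatten

/-- `π_d(v)`: the smallest `t ≥ 1` dividing `d` such that
`κ_d(v)(i + t) = κ_d(v)(i)` for all `i ∈ [1, d - t]`. -/
noncomputable def piD {A : Type*} (d : ℕ) (v : List A) : ℕ :=
  sInf {t | t ∣ d ∧ 1 ≤ t ∧ ∀ i : ℕ, 1 ≤ i → i + t ≤ d →
    kappa d v (i + t) = kappa d v i}

/-!
An embedding `u ⊑_d x` can only shrink the letter sets `κ_d`, and for `d ∣ |w|` every power `w^k`
has the same sets as `w`. Conversely, if `d ∣ |u|` and `κ_d(u) ⊆ κ_d(w)` residue by residue, the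
`p`-th letter of `u` can be matched inside the `p`-th copy of `w` in `w^|u|` at a position of the
same residue, giving `u ⊑_d w^|u|`. So for `d ∣ |w|` the closure of `w*` consists exactly of the words
`u` with `d ∣ |u|` and `κ_d(u) ⊆ κ_d(w)`, and both directions of the theorem compare two such
descriptions.
-/

section

variable {A : Type*}

lemma wpow_succ (w : List A) (k : ℕ) : wpow w (k + 1) = w ++ wpow w k := by
  simp [wpow, List.replicate_succ]

lemma length_wpow (w : List A) (k : ℕ) : (wpow w k).length = k * w.length := by
  simp [wpow, List.sum_replicate]

lemma getElem?_wpow (w : List A) {k p : ℕ} (hp : p < k * w.length) :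
    (wpow w k)[p]? = w[p % w.length]? := by
  induction k generalizing p with
  | zero => omega
  | succ k ih =>
    rw [wpow_succ]
    by_cases h : p < w.length
    · rw [List.getElem?_append_left h, Nat.mod_eq_of_lt h]
    · rw [List.getElem?_append_right (by omega), ih (by rw [Nat.add_one_mul] at hp; omega),
        Nat.mod_eq_sub_mod (a := p) (by omega)]

lemma kappa_congr (d : ℕ) (w : List A) {i j : ℕ} (h : i % d = j % d) :
    kappa d w i = kappa d w j := by
  simp only [kappa, h]

lemma getElem_mem_kappa (d : ℕ) (w : List A) {p : ℕ} (hp : p < w.length) :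
    w[p] ∈ kappa d w (p + 1) :=
  ⟨p, List.getElem?_eq_getElem hp, rfl⟩

lemma kappa_wpow_subset {d : ℕ} {w : List A} (hw : d ∣ w.length) (k i : ℕ) :
    kappa d (wpow w k) i ⊆ kappa d w i := by
  rintro a ⟨p, hp, hpi⟩
  have hlt : p < k * w.length := length_wpow w k ▸ (List.getElem?_eq_some_iff.mp hp).1
  refine ⟨p % w.length, getElem?_wpow w hlt ▸ hp, ?_⟩
  exact (Nat.ModEq.add_right 1 (Nat.mod_mod_of_dvd p hw)).trans hpi

lemma forall_kappa_subset_of_Icc {d : ℕ} (hd : 1 ≤ d) {u w : List A}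
    (h : ∀ i ∈ Finset.Icc 1 d, kappa d u i ⊆ kappa d w i) (i : ℕ) :
    kappa d u i ⊆ kappa d w i := by
  obtain ⟨j, hj, hji⟩ : ∃ j ∈ Finset.Icc 1 d, j % d = i % d := by
    by_cases h0 : i % d = 0
    · exact ⟨d, Finset.mem_Icc.mpr ⟨hd, le_rfl⟩, by rw [Nat.mod_self, h0]⟩
    · exact ⟨i % d, Finset.mem_Icc.mpr ⟨by omega, (Nat.mod_lt i hd).le⟩, Nat.mod_mod i d⟩
  rw [kappa_congr d u hji.symm, kappa_congr d w hji.symm]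
  exact h j hj

lemma ModEmb.kappa_subset {d : ℕ} {u x : List A} (h : ModEmb d u x) (i : ℕ) :
    kappa d u i ⊆ kappa d x i := by
  obtain ⟨-, α, -, hget, hmod⟩ := h
  rintro a ⟨p, hp, hpi⟩
  obtain ⟨hplt, rfl⟩ := List.getElem?_eq_some_iff.mp hp
  refine ⟨α ⟨p, hplt⟩, ?_, (Nat.ModEq.add_right 1 (hmod ⟨p, hplt⟩)).trans hpi⟩
  simpa using (hget ⟨p, hplt⟩).symm

lemma modEmb_wpow_length {d : ℕ} {u w : List A} (hu : d ∣ u.length) (hw : d ∣ w.length)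
    (h : ∀ i, kappa d u i ⊆ kappa d w i) : ModEmb d u (wpow w u.length) := by
  have hmatch (p : Fin u.length) : ∃ q < w.length, w[q]? = some u[p] ∧ q % d = p % d := by
    obtain ⟨q, hq, hqp⟩ := h _ (getElem_mem_kappa d u p.isLt)
    exact ⟨q, (List.getElem?_eq_some_iff.mp hq).1, hq, Nat.ModEq.add_right_cancel' 1 hqp⟩
  choose q hqlt hq hqmod using hmatch
  have hlt (p : Fin u.length) : p * w.length + q p < u.length * w.length := by
    nlinarith [hqlt p, p.isLt]
  refine ⟨?_, fun p => ⟨p * w.length + q p, by rw [length_wpow]; exact hlt p⟩, ?_,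
    fun p => ?_, fun p => ?_⟩
  · rw [length_wpow, Nat.mod_eq_zero_of_dvd hu, Nat.mod_eq_zero_of_dvd (hu.mul_right _)]
  · intro p p' hpp'
    have : (p + 1) * w.length ≤ p' * w.length := Nat.mul_le_mul_right _ hpp'
    exact Fin.mk_lt_mk.mpr (by rw [Nat.add_one_mul] at this; linarith [hqlt p])
  · have hget : (wpow w u.length)[p * w.length + q p]? = some u[p] := by
      rw [getElem?_wpow w (hlt p), mul_comm, Nat.mul_add_mod,
        Nat.mod_eq_of_lt (hqlt p), hq p]
    simpa using (List.getElem?_eq_some_iff.mp hget).2.symm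
  · have hblock : p * w.length + q p ≡ 0 + q p [MOD d] :=
      (Nat.modEq_zero_iff_dvd.mpr (hw.mul_left p)).add_right (q p)
    exact (zero_add (q p) ▸ hblock).trans (hqmod p)

lemma mem_dclMod_wpow_iff {d : ℕ} {w : List A} (hw : d ∣ w.length) (u : List A) :
    u ∈ dclMod d {x | ∃ k, x = wpow w k} ↔
      d ∣ u.length ∧ ∀ i, kappa d u i ⊆ kappa d w i := by
  constructor
  · rintro ⟨_, ⟨k, rfl⟩, hemb⟩
    refine ⟨?_, fun i => (hemb.kappa_subset i).trans (kappa_wpow_subset hw k i)⟩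
    rw [Nat.dvd_iff_mod_eq_zero, hemb.1, length_wpow]
    exact Nat.mod_eq_zero_of_dvd (hw.mul_left k)
  · rintro ⟨hu, h⟩
    exact ⟨_, ⟨u.length, rfl⟩, modEmb_wpow_length hu hw h⟩

end

theorem dcl_star_inclusion {A : Type*} (d : ℕ) (hd : 1 ≤ d) (v w : List A)
    (hv : d ∣ v.length) (hw : d ∣ w.length) :
    dclMod d {u | ∃ k : ℕ, u = wpow v k} ⊆
        dclMod d {u | ∃ k : ℕ, u = wpow w k} ↔
      ∀ i ∈ Finset.Icc 1 d, kappa d v i ⊆ kappa d w i := by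
  constructor
  · intro hsub i _
    have hv_mem : v ∈ dclMod d {u | ∃ k : ℕ, u = wpow v k} :=
      (mem_dclMod_wpow_iff hv v).mpr ⟨hv, fun _ => subset_rfl⟩
    exact ((mem_dclMod_wpow_iff hw v).mp (hsub hv_mem)).2 i
  · intro h u hu
    obtain ⟨hu_len, hu_kappa⟩ := (mem_dclMod_wpow_iff hv u).mp hu
    exact (mem_dclMod_wpow_iff hw u).mpr
      ⟨hu_len, fun i => (hu_kappa i).trans (forall_kappa_subset_of_Icc hd h i)⟩
end

section
/- Let (X, ≼₁), (X, ≼₂) be WQOs with conjunction ≼, let Iₛ be ≼ₛ-ideals with I = I₁ ∩ I₂, and suppose there is a ≼-directed set D₀ ⊆ I with Iₛ equal to the ≼ₛ-downward closure of D₀ for s = 1,2. Then for any L ⊆ X: there exists a ≼-directed set D ⊆ L with I equal to the ≼-downward closure of D, if and only if there exists a ≼-directed set D' ⊆ L with Iₛ equal to the ≼ₛ-downward closure of D' for s = 1,2. -/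
/-- A quasi-order that is a well-quasi-ordering. -/
def IsWQO {X : Type*} (r : X → X → Prop) : Prop :=
  Reflexive r ∧ Transitive r ∧ ∀ f : ℕ → X, ∃ i j : ℕ, i < j ∧ r (f i) (f j)

/-- Downward closed set with respect to `r`. -/
def DownClosed {X : Type*} (r : X → X → Prop) (S : Set X) : Prop :=
  ∀ ⦃x y : X⦄, r x y → y ∈ S → x ∈ S

/-- A set is `r`-directed: any two elements have a common upper bound in it. -/
def DirectedSet {X : Type*} (r : X → X → Prop) (S : Set X) : Prop :=
  ∀ x ∈ S, ∀ y ∈ S, ∃ z ∈ S, r x z ∧ r y z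

/-- An ideal: nonempty, downward closed and directed. -/
def IsIdeal {X : Type*} (r : X → X → Prop) (I : Set X) : Prop :=
  I.Nonempty ∧ DownClosed r I ∧ DirectedSet r I

/-- Downward closure of a set with respect to `r`. -/
def dcl {X : Type*} (r : X → X → Prop) (S : Set X) : Set X :=
  {x | ∃ y ∈ S, r x y}

/- Both directions only compare downward closures. A set `D` whose `≼`-closure is `I` is cofinal
with `D₀` inside `I`, hence has the same `≼ₛ`-closures as `D₀`, namely `Iₛ`. Conversely, if `D'` is
`≼`-directed then any `x` below some `d₁ ∈ D'` for `≼₁` and some `d₂ ∈ D'` for `≼₂` lies `≼`-below a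
common upper bound of `d₁, d₂` in `D'`, so the `≼`-closure of `D'` is `I₁ ∩ I₂`. -/

section DownwardClosure

variable {X : Type*} {r r₁ r₂ : X → X → Prop} {S T : Set X}

theorem subset_dcl (hr : Reflexive r) : S ⊆ dcl r S :=
  fun x hx => ⟨x, hx, hr x⟩

theorem dcl_mono_rel (h : ∀ x y, r₁ x y → r₂ x y) : dcl r₁ S ⊆ dcl r₂ S :=
  fun x ⟨y, hy, hxy⟩ => ⟨y, hy, h x y hxy⟩

theorem dcl_subset_dcl_of_subset_dcl (ht : Transitive r) (h : S ⊆ dcl r T) :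
    dcl r S ⊆ dcl r T :=
  fun _ ⟨_, hy, hxy⟩ =>
    let ⟨z, hz, hyz⟩ := h hy
    ⟨z, hz, ht hxy hyz⟩

theorem dcl_eq_dcl_of_subset_dcl (ht : Transitive r) (hST : S ⊆ dcl r T) (hTS : T ⊆ dcl r S) :
    dcl r S = dcl r T :=
  (dcl_subset_dcl_of_subset_dcl ht hST).antisymm (dcl_subset_dcl_of_subset_dcl ht hTS)

theorem DirectedSet.dcl_and (hS : DirectedSet (fun x y => r₁ x y ∧ r₂ x y) S)
    (ht₁ : Transitive r₁) (ht₂ : Transitive r₂) :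
    dcl (fun x y => r₁ x y ∧ r₂ x y) S = dcl r₁ S ∩ dcl r₂ S := by
  refine (Set.subset_inter (dcl_mono_rel fun _ _ => And.left)
    (dcl_mono_rel fun _ _ => And.right)).antisymm ?_
  rintro x ⟨⟨y₁, hy₁, hxy₁⟩, ⟨y₂, hy₂, hxy₂⟩⟩
  obtain ⟨z, hz, hy₁z, hy₂z⟩ := hS y₁ hy₁ y₂ hy₂
  exact ⟨z, hz, ht₁ hxy₁ hy₁z.1, ht₂ hxy₂ hy₂z.2⟩

end DownwardClosure

theorem conjunction_adherence_general {X : Type*} (r₁ r₂ : X → X → Prop)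
    (h₁ : IsWQO r₁) (h₂ : IsWQO r₂)
    (I₁ I₂ : Set X)
    (I : Set X) (hI : I = I₁ ∩ I₂)
    (D₀ : Set X) (hD₀ : D₀ ⊆ I)
    (h₀₁ : I₁ = dcl r₁ D₀) (h₀₂ : I₂ = dcl r₂ D₀) (L : Set X) :
    (∃ D : Set X, D ⊆ L ∧ DirectedSet (fun x y => r₁ x y ∧ r₂ x y) D ∧
        I = dcl (fun x y => r₁ x y ∧ r₂ x y) D) ↔
      (∃ D' : Set X, D' ⊆ L ∧ DirectedSet (fun x y => r₁ x y ∧ r₂ x y) D' ∧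
        I₁ = dcl r₁ D' ∧ I₂ = dcl r₂ D') := by
  obtain ⟨hr₁, ht₁, -⟩ := h₁
  obtain ⟨hr₂, ht₂, -⟩ := h₂
  subst hI h₀₁ h₀₂
  constructor
  · rintro ⟨D, hDL, hD, hID⟩
    have hDI : D ⊆ dcl r₁ D₀ ∩ dcl r₂ D₀ := hID ▸ subset_dcl fun x => ⟨hr₁ x, hr₂ x⟩
    have hD₀D : D₀ ⊆ dcl (fun x y => r₁ x y ∧ r₂ x y) D := hID ▸ hD₀
    exact ⟨D, hDL, hD,
      dcl_eq_dcl_of_subset_dcl ht₁ (hD₀D.trans (dcl_mono_rel fun _ _ => And.left))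
        (hDI.trans Set.inter_subset_left),
      dcl_eq_dcl_of_subset_dcl ht₂ (hD₀D.trans (dcl_mono_rel fun _ _ => And.right))
        (hDI.trans Set.inter_subset_right)⟩
  · rintro ⟨D', hD'L, hD', hD'₁, hD'₂⟩
    exact ⟨D', hD'L, hD', by rw [hD'.dcl_and ht₁ ht₂, hD'₁, hD'₂]⟩

theorem conjunction_adherence {X : Type*} (r₁ r₂ : X → X → Prop)
    (h₁ : IsWQO r₁) (h₂ : IsWQO r₂)
    (I₁ I₂ : Set X) (hI₁ : IsIdeal r₁ I₁) (hI₂ : IsIdeal r₂ I₂)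
    (I : Set X) (hI : I = I₁ ∩ I₂)
    (D₀ : Set X) (hD₀ : D₀ ⊆ I)
    (hdir₀ : DirectedSet (fun x y => r₁ x y ∧ r₂ x y) D₀)
    (h₀₁ : I₁ = dcl r₁ D₀) (h₀₂ : I₂ = dcl r₂ D₀) (L : Set X) :
    (∃ D : Set X, D ⊆ L ∧ DirectedSet (fun x y => r₁ x y ∧ r₂ x y) D ∧
        I = dcl (fun x y => r₁ x y ∧ r₂ x y) D) ↔
      (∃ D' : Set X, D' ⊆ L ∧ DirectedSet (fun x y => r₁ x y ∧ r₂ x y) D' ∧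
        I₁ = dcl r₁ D' ∧ I₂ = dcl r₂ D') :=
  conjunction_adherence_general r₁ r₂ h₁ h₂ I₁ I₂ I hI D₀ hD₀ h₀₁ h₀₂ L
end
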